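/- arXiv:1512.04750 — 5 statements merged into one kernel-verified Lean document; each statement's English description precedes it below -/
import Mathlib

section
/- Let W₁, W₂, … be real-valued random variables such that for each n there exists aₙ ∈ ℝ with P(Wₙ = aₙ) ≥ p for some fixed p > 0. If Wₙ converges in distribution to a random variable W, then the law of W has an atom. -/
/-!
A sequence of probability measures converging weakly on a Polish space is tight (Prokhorov), so the
atoms `aₙ`, each carrying mass at least `p`, all lie in one compact set and have a cluster point
`x`. By the portmanteau theorem every closed ball around `x` has limit mass at least `p`, and
letting the radius shrink gives `μ {x} ≥ p`.
-/

open MeasureTheory Filter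

namespace MeasureTheory

open Topology Metric Set
open scoped ENNReal

variable {X : Type*} [MeasurableSpace X]

theorem ProbabilityMeasure.isTightMeasureSet_range_of_tendsto [PseudoMetricSpace X]
    [SecondCountableTopology X] [CompleteSpace X] [BorelSpace X]
    {ν : ℕ → ProbabilityMeasure X} {μ : ProbabilityMeasure X} (h : Tendsto ν atTop (𝓝 μ)) :
    IsTightMeasureSet (range fun n ↦ (ν n : Measure X)) := by
  refine (isTightMeasureSet_of_isCompact_closure
    (h.isCompact_insert_range.closure_of_subset (subset_insert μ (range ν)))).subset ?_
  rintro _ ⟨n, rfl⟩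
  exact ⟨ν n, mem_range_self n, rfl⟩

theorem ProbabilityMeasure.le_measure_of_frequently_le_of_tendsto [TopologicalSpace X]
    [OpensMeasurableSpace X] [HasOuterApproxClosed X] {ι : Type*} {L : Filter ι}
    {ν : ι → ProbabilityMeasure X} {μ : ProbabilityMeasure X} (h : Tendsto ν L (𝓝 μ))
    {F : Set X} (hF : IsClosed F) {c : ℝ≥0∞} (hc : ∃ᶠ i in L, c ≤ (ν i : Measure X) F) :
    c ≤ (μ : Measure X) F :=
  (le_limsup_of_frequently_le hc (isBoundedUnder_of ⟨1, fun _ ↦ prob_le_one⟩)).trans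
    (ProbabilityMeasure.limsup_measure_closed_le_of_tendsto h hF)

theorem le_measure_singleton_of_forall_le_measure_closedBall [MetricSpace X]
    [OpensMeasurableSpace X] {μ : Measure X} [IsFiniteMeasure μ] {x : X} {c : ℝ≥0∞}
    (hc : ∀ ε > 0, c ≤ μ (closedBall x ε)) : c ≤ μ {x} := by
  have hlim : Tendsto (fun r ↦ μ (cthickening r {x})) (𝓝[>] 0) (𝓝 (μ {x})) :=
    (tendsto_measure_cthickening_of_isClosed ⟨1, one_pos, measure_ne_top μ _⟩
      isClosed_singleton).mono_left nhdsWithin_le_nhds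
  refine ge_of_tendsto hlim ?_
  filter_upwards [self_mem_nhdsWithin] with r (hr : 0 < r)
  rw [cthickening_singleton x hr.le]
  exact hc r hr

theorem ProbabilityMeasure.exists_le_measure_singleton_of_tendsto [MetricSpace X]
    [SecondCountableTopology X] [CompleteSpace X] [BorelSpace X]
    {ν : ℕ → ProbabilityMeasure X} {μ : ProbabilityMeasure X} (h : Tendsto ν atTop (𝓝 μ))
    {a : ℕ → X} {c : ℝ≥0∞} (hc : 0 < c) (hatom : ∀ n, c ≤ (ν n : Measure X) {a n}) :
    ∃ x, c ≤ (μ : Measure X) {x} := by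
  have hc_top : c ≠ ∞ := ne_top_of_le_ne_top ENNReal.one_ne_top ((hatom 0).trans prob_le_one)
  obtain ⟨K, hK, hKc⟩ := isTightMeasureSet_iff_exists_isCompact_measure_compl_le.mp
    (isTightMeasureSet_range_of_tendsto h) (c / 2) (ENNReal.half_pos hc.ne')
  have ha : ∀ n, a n ∈ K := fun n ↦ by
    by_contra han
    have : c ≤ c / 2 := (hatom n).trans <| (measure_mono (singleton_subset_iff.mpr han)).trans <|
      hKc _ (mem_range_self n)
    exact (ENNReal.half_lt_self hc.ne' hc_top).not_ge this
  obtain ⟨x, -, hx⟩ := hK.exists_mapClusterPt_of_frequently (l := atTop) (.of_forall ha)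
  refine ⟨x, le_measure_singleton_of_forall_le_measure_closedBall fun ε hε ↦ ?_⟩
  refine le_measure_of_frequently_le_of_tendsto h isClosed_closedBall ?_
  refine (hx.frequently (closedBall_mem_nhds x hε)).mono fun n hn ↦ ?_
  exact (hatom n).trans (measure_mono (singleton_subset_iff.mpr hn))

end MeasureTheory

theorem stmt_4 {Ω : Type*} [MeasurableSpace Ω]
    (P : ProbabilityMeasure Ω) (W : ℕ → Ω → ℝ)
    (hW : ∀ n, AEMeasurable (W n) (P : Measure Ω))
    (a : ℕ → ℝ) (p : ℝ) (hp : 0 < p)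
    (hatom : ∀ n, ENNReal.ofReal p ≤ (P : Measure Ω) {ω | W n ω = a n})
    (μ : ProbabilityMeasure ℝ)
    (hconv : Tendsto (fun n => P.map (hW n)) atTop (nhds μ)) :
    ∃ x : ℝ, 0 < (μ : Measure ℝ) {x} := by
  have hatom_map : ∀ n, ENNReal.ofReal p ≤ (P.map (hW n) : Measure ℝ) {a n} := fun n ↦ by
    rw [ProbabilityMeasure.toMeasure_map,
      Measure.map_apply_of_aemeasurable (hW n) (measurableSet_singleton _)]
    exact hatom n
  obtain ⟨x, hx⟩ := ProbabilityMeasure.exists_le_measure_singleton_of_tendsto hconv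
    (ENNReal.ofReal_pos.mpr hp) hatom_map
  exact ⟨x, (ENNReal.ofReal_pos.mpr hp).trans_le hx⟩
end

section
/- Let ν(n) denote the n-th record time of an i.i.d. sequence with continuous distribution. Then for all n ≥ 2, E[1/ν(n)] ≤ 3/(4n). -/
/-!
Let `ξ i` be the indicator that `i` is a record time, so the `ξ i` are independent Bernoulli(1/i)
and `ν n` is the first time their partial sums reach `n`. Since `{ν m = l}` depends only on
`ξ 1, …, ξ l`, the next record after one at `l` is at `j > l` with probability
`∏_{l<i<j} (1 - 1/i) · 1/j = l / ((j - 1) j)`. Summed against `1/(j+1)` this kernel telescopes to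
`1/(2(l+1))`, so `E[1/(ν m + 1)] ≤ 2^{-m}`. As `1/j ≤ (3/2)/(j+1)` for `j ≥ 2`, the same kernel
gives `E[1/ν (m+1)] ≤ (3/4) E[1/(ν m + 1)] ≤ (3/4) 2^{-m} ≤ 3/(4(m+1))`.
-/

open MeasureTheory ProbabilityTheory Finset
open scoped ENNReal

namespace RecordTime

def partialSum (x : ℕ → ℕ) (j : ℕ) : ℕ := ∑ i ∈ Icc 1 j, x i

-- `0` when the value `k` is never hit
noncomputable def hitTime (x : ℕ → ℕ) (k : ℕ) : ℕ :=
  sInf {j | 1 ≤ j ∧ partialSum x j = k}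

section Deterministic

variable {x : ℕ → ℕ}

@[simp] lemma partialSum_zero : partialSum x 0 = 0 := rfl

lemma partialSum_succ (j : ℕ) : partialSum x (j + 1) = partialSum x j + x (j + 1) :=
  sum_Icc_succ_top (by omega) x

lemma partialSum_add_sum_Ioc {a b : ℕ} (hab : a ≤ b) :
    partialSum x a + ∑ i ∈ Ioc a b, x i = partialSum x b := by
  have hIcc : ∀ n, Icc 1 n = Ioc 0 n := Icc_add_one_left_eq_Ioc 0
  simp only [partialSum, hIcc]
  exact sum_Ioc_consecutive x (Nat.zero_le a) hab

lemma partialSum_mono : Monotone (partialSum x) := fun _ _ hab =>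
  partialSum_add_sum_Ioc hab ▸ Nat.le_add_right _ _

lemma hitTime_eq_iff {k l : ℕ} (hl : 1 ≤ l) :
    hitTime x k = l ↔ partialSum x l = k ∧ ∀ j ∈ Ico 1 l, partialSum x j ≠ k := by
  constructor
  · rintro rfl
    refine ⟨(Nat.sInf_mem (Nat.nonempty_of_pos_sInf hl)).2, fun j hj hjk => ?_⟩
    exact (mem_Ico.1 hj).2.not_ge (Nat.sInf_le ⟨(mem_Ico.1 hj).1, hjk⟩)
  · rintro ⟨hlk, hmin⟩
    refine IsLeast.csInf_eq ⟨⟨hl, hlk⟩, fun j ⟨hj, hjk⟩ => ?_⟩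
    by_contra! hjl
    exact hmin j (mem_Ico.2 ⟨hj, hjl⟩) hjk

lemma hitTime_eq_iff_of_eqOn {y : ℕ → ℕ} {k l : ℕ} (hl : 1 ≤ l)
    (hxy : Set.EqOn x y (Icc 1 l)) : hitTime x k = l ↔ hitTime y k = l := by
  have hS : ∀ j ≤ l, partialSum x j = partialSum y j := fun j hj =>
    sum_congr rfl fun i hi => hxy (Icc_subset_Icc_right hj hi)
  rw [hitTime_eq_iff hl, hitTime_eq_iff hl, hS l le_rfl]
  exact and_congr_right' <| forall₂_congr fun j hj => by rw [hS j (mem_Ico.1 hj).2.le]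

lemma hitTime_succ_eq_iff (hx : ∀ i, x i ≤ 1) {k j : ℕ} (hk : 1 ≤ k) (hj : j ≠ 0) :
    hitTime x (k + 1) = j ↔
      ∃ l ∈ Ico 1 j, hitTime x k = l ∧ ∀ i ∈ Ioc l j, x i = if i = j then 1 else 0 := by
  obtain ⟨j, rfl⟩ : ∃ j', j = j' + 1 := ⟨j - 1, by omega⟩
  have hstep := partialSum_succ (x := x) j
  have hxj := hx (j + 1)
  rw [hitTime_eq_iff (by omega)]
  constructor
  · rintro ⟨hSj1, hmin⟩
    have hSj : partialSum x j = k := by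
      rcases Nat.eq_zero_or_pos j with rfl | hj0
      · simp only [partialSum_zero, zero_add] at hstep hSj1 hxj; omega
      · have := hmin j (mem_Ico.2 ⟨hj0, by omega⟩); omega
    have hj1 : 1 ≤ j := Nat.one_le_iff_ne_zero.2 fun h => by subst h; simp at hSj; omega
    obtain ⟨hl1, hlk⟩ : hitTime x k ∈ {i | 1 ≤ i ∧ partialSum x i = k} :=
      Nat.sInf_mem ⟨j, hj1, hSj⟩
    have hlj : hitTime x k ≤ j := Nat.sInf_le ⟨hj1, hSj⟩
    have hgap : ∑ i ∈ Ioc (hitTime x k) j, x i = 0 := by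
      have := partialSum_add_sum_Ioc (x := x) hlj; omega
    refine ⟨hitTime x k, mem_Ico.2 ⟨hl1, by omega⟩, rfl, fun i hi => ?_⟩
    rw [mem_Ioc] at hi
    split_ifs with hij
    · subst hij; omega
    · exact sum_eq_zero_iff.1 hgap i (mem_Ioc.2 ⟨hi.1, by omega⟩)
  · rintro ⟨l, hl, hkl, hpat⟩
    rw [mem_Ico] at hl
    obtain ⟨hlk, -⟩ := (hitTime_eq_iff hl.1).1 hkl
    have hSj : partialSum x j = k := by
      rw [← partialSum_add_sum_Ioc (by omega : l ≤ j), hlk, sum_eq_zero fun i hi => ?_,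
        add_zero]
      rw [hpat i (Ioc_subset_Ioc_right (by omega) hi), if_neg (by rw [mem_Ioc] at hi; omega)]
    have hxj1 := hpat (j + 1) (mem_Ioc.2 ⟨by omega, le_rfl⟩)
    rw [if_pos rfl] at hxj1
    refine ⟨by omega, fun i hi => ?_⟩
    have := partialSum_mono (x := x) (show i ≤ j by rw [mem_Ico] at hi; omega)
    omega

lemma measurable_partialSum (j : ℕ) : Measurable fun x : ℕ → ℕ => partialSum x j :=
  Finset.measurable_sum _ fun i _ => measurable_pi_apply i

lemma measurable_hitTime (k : ℕ) : Measurable fun x : ℕ → ℕ => hitTime x k := by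
  have hS : ∀ j, MeasurableSet {x : ℕ → ℕ | partialSum x j = k} := fun j =>
    measurable_partialSum j (measurableSet_singleton k)
  refine measurable_to_countable' fun l => ?_
  rcases Nat.eq_zero_or_pos l with rfl | hl
  · have : (fun x => hitTime x k) ⁻¹' {0} =
        ⋂ j, ⋂ (_ : 1 ≤ j), {x | partialSum x j = k}ᶜ := by
      ext x
      simp [hitTime, Nat.sInf_eq_zero, Set.eq_empty_iff_forall_notMem]
    rw [this]
    exact .iInter fun j => .iInter fun _ => (hS j).compl
  · have : (fun x => hitTime x k) ⁻¹' {l} =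
        {x | partialSum x l = k} ∩ ⋂ j ∈ Ico 1 l, {x | partialSum x j = k}ᶜ := by
      ext x
      simp [hitTime_eq_iff hl]
    rw [this]
    exact (hS l).inter (Finset.measurableSet_biInter _ fun j _ => (hS j).compl)

end Deterministic

section Kernel

-- the probability that the record following one at time `l` occurs at time `j`
noncomputable def recordKernel (l j : ℕ) : ℝ≥0∞ :=
  if 1 ≤ l ∧ l < j then ENNReal.ofReal (l / ((j - 1) * j)) else 0

-- `1 / (j + 1)`, except at the junk value `0` of a hitting time that never happens
noncomputable def invSucc (j : ℕ) : ℝ≥0∞ :=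
  if j = 0 then 0 else ENNReal.ofReal (j + 1 : ℝ)⁻¹

lemma invSucc_le_half (j : ℕ) : invSucc j ≤ ENNReal.ofReal (1 / 2) := by
  unfold invSucc
  split_ifs with hj
  · exact bot_le
  · refine ENNReal.ofReal_le_ofReal ?_
    have : (2 : ℝ) ≤ j + 1 := by norm_cast; omega
    rw [one_div]
    exact inv_anti₀ two_pos this

lemma prod_Ioc_one_sub_one_div {l j : ℕ} (hl : 1 ≤ l) (hlj : l ≤ j) :
    ∏ i ∈ Ioc l j, (1 - 1 / (i : ℝ)) = l / j := by
  induction j, hlj using Nat.le_induction with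
  | base =>
    have : (l : ℝ) ≠ 0 := by positivity
    simp [this]
  | succ j hlj ih =>
    have : (j : ℝ) ≠ 0 := by norm_cast; omega
    rw [prod_Ioc_succ_top hlj, ih]
    push_cast
    field_simp
    ring

lemma tsum_ofReal_le_of_le_sub {t h : ℕ → ℝ} (ht₀ : ∀ k, 0 ≤ t k)
    (ht : ∀ k, t k ≤ h k - h (k + 1)) (hh : ∀ k, 0 ≤ h k) :
    ∑' k, ENNReal.ofReal (t k) ≤ ENNReal.ofReal (h 0) := by
  refine ENNReal.tsum_le_of_sum_range_le fun n => ?_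
  rw [← ENNReal.ofReal_sum_of_nonneg fun k _ => ht₀ k]
  refine ENNReal.ofReal_le_ofReal ?_
  calc ∑ k ∈ range n, t k ≤ ∑ k ∈ range n, (h k - h (k + 1)) := sum_le_sum fun k _ => ht k
    _ = h 0 - h n := sum_range_sub' h n
    _ ≤ h 0 := by linarith [hh n]

lemma tsum_recordKernel_mul_invSucc_le (l : ℕ) :
    ∑' j, recordKernel l j * invSucc j ≤ ENNReal.ofReal (1 / 2) * invSucc l := by
  rcases Nat.eq_zero_or_pos l with rfl | hl
  · simp [recordKernel]
  have hl' : (1 : ℝ) ≤ l := by exact_mod_cast hl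
  rw [← ENNReal.summable.sum_add_tsum_nat_add' (k := l + 1),
    sum_eq_zero fun j hj => by have := mem_range.1 hj; simp [recordKernel]; omega, zero_add]
  have hterm : ∀ k : ℕ, recordKernel l (k + (l + 1)) * invSucc (k + (l + 1)) =
      ENNReal.ofReal (l / ((k + l) * (k + l + 1) * (k + l + 2))) := by
    intro k
    have : (0 : ℝ) < k + l := by positivity
    rw [recordKernel, if_pos ⟨hl, by omega⟩, invSucc, if_neg (by omega),
      ← ENNReal.ofReal_mul' (by positivity)]
    have hc : ((k + (l + 1) : ℕ) : ℝ) - 1 = k + l := by push_cast; ring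
    rw [hc]
    congr 1
    push_cast
    field_simp
    ring
  rw [tsum_congr hterm]
  refine (tsum_ofReal_le_of_le_sub (h := fun a : ℕ => l / (2 * (a + l) * (a + l + 1)))
    (fun k => by positivity) (fun k => le_of_eq ?_) (fun k => by positivity)).trans_eq ?_
  · have : (0 : ℝ) < k + l := by positivity
    push_cast
    field_simp
    ring
  · rw [invSucc, if_neg (by omega), ← ENNReal.ofReal_mul (by norm_num)]
    congr 1
    push_cast
    field_simp
    ring

lemma tsum_recordKernel_mul_inv_le (l : ℕ) :
    ∑' j, recordKernel l j * ENNReal.ofReal (j : ℝ)⁻¹ ≤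
      ENNReal.ofReal (3 / 4) * invSucc l :=
  calc ∑' j, recordKernel l j * ENNReal.ofReal (j : ℝ)⁻¹
      ≤ ∑' j, recordKernel l j * (ENNReal.ofReal (3 / 2) * invSucc j) := by
        refine ENNReal.tsum_le_tsum fun j => ?_
        unfold recordKernel
        split_ifs with hlj
        · gcongr
          have hj : (2 : ℝ) ≤ j := by norm_cast; omega
          rw [invSucc, if_neg (by omega), ← ENNReal.ofReal_mul (by norm_num)]
          refine ENNReal.ofReal_le_ofReal ?_
          rw [inv_le_iff_one_le_mul₀ (by positivity)]
          field_simp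
          linarith
        · simp
    _ = ENNReal.ofReal (3 / 2) * ∑' j, recordKernel l j * invSucc j := by
        rw [← ENNReal.tsum_mul_left]
        exact tsum_congr fun j => by ring
    _ ≤ ENNReal.ofReal (3 / 2) * (ENNReal.ofReal (1 / 2) * invSucc l) := by
        gcongr
        exact tsum_recordKernel_mul_invSucc_le l
    _ = ENNReal.ofReal (3 / 4) * invSucc l := by
        rw [← mul_assoc, ← ENNReal.ofReal_mul (by norm_num)]
        norm_num

end Kernel

section Probability

lemma lintegral_comp_eq_tsum {Ω : Type*} [MeasurableSpace Ω] {P : Measure Ω} {X : Ω → ℕ}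
    (hX : Measurable X) (f : ℕ → ℝ≥0∞) :
    ∫⁻ ω, f (X ω) ∂P = ∑' l, f l * P {ω | X ω = l} := by
  rw [← lintegral_map (measurable_of_countable f) hX, lintegral_countable']
  simp_rw [Measure.map_apply hX (measurableSet_singleton _)]
  rfl

lemma measure_forall_eq_eq_prod {Ω ι β : Type*} [MeasurableSpace Ω] [MeasurableSpace β]
    [MeasurableSingletonClass β] {P : Measure Ω} {ξ : ι → Ω → β} (hind : iIndepFun ξ P)
    (T : Finset ι) (e : ι → β) :
    P {ω | ∀ i ∈ T, ξ i ω = e i} = ∏ i ∈ T, P {ω | ξ i ω = e i} := by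
  convert hind.measure_inter_preimage_eq_mul T (sets := fun i => {e i})
    (fun i _ => measurableSet_singleton _) using 2
  · ext ω
    simp
  · rfl

lemma measure_eq_zero_eq_one_sub {Ω : Type*} [MeasurableSpace Ω] {P : Measure Ω}
    [IsProbabilityMeasure P] {X : Ω → ℕ} (hX : Measurable X) (hle : ∀ ω, X ω ≤ 1) :
    P {ω | X ω = 0} = 1 - P {ω | X ω = 1} := by
  have hcompl : {ω | X ω = 0} = {ω | X ω = 1}ᶜ := by
    ext ω
    show X ω = 0 ↔ ¬X ω = 1
    have := hle ω
    omega
  have hone : MeasurableSet {ω | X ω = 1} := hX (measurableSet_singleton 1)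
  rw [hcompl, prob_compl_eq_one_sub hone]

variable {Ω : Type*} [MeasurableSpace Ω] {P : Measure Ω} {ξ : ℕ → Ω → ℕ}

lemma measurable_hitTime_comp (hmeas : ∀ i, Measurable (ξ i)) (k : ℕ) :
    Measurable fun ω => hitTime (ξ · ω) k :=
  (measurable_hitTime k).comp (measurable_pi_lambda _ hmeas)

-- `{hitTime (ξ · ω) k = l}` depends only on `ξ 1, …, ξ l`.
lemma measure_hitTime_eq_inter_eq_mul (hind : iIndepFun ξ P) (hmeas : ∀ i, Measurable (ξ i))
    {k l : ℕ} (hl : 1 ≤ l) {T : Finset ℕ} (hT : ∀ i ∈ T, l < i) (e : ℕ → ℕ) :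
    P ({ω | hitTime (ξ · ω) k = l} ∩ {ω | ∀ i ∈ T, ξ i ω = e i}) =
      P {ω | hitTime (ξ · ω) k = l} * P {ω | ∀ i ∈ T, ξ i ω = e i} := by
  have hdisj : Disjoint (Icc 1 l) T :=
    disjoint_left.2 fun i hi hiT => (hT i hiT).not_ge (mem_Icc.1 hi).2
  have hpast : {ω | hitTime (ξ · ω) k = l} = (fun ω (i : Icc 1 l) => ξ i ω) ⁻¹'
      {v | hitTime (fun i => if h : i ∈ Icc 1 l then v ⟨i, h⟩ else 0) k = l} := by
    ext ω
    exact hitTime_eq_iff_of_eqOn hl fun i hi => by rw [dif_pos (mem_coe.1 hi)]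
  have hfuture :
      {ω | ∀ i ∈ T, ξ i ω = e i} = (fun ω (i : T) => ξ i ω) ⁻¹' {fun i : T => e i} := by
    ext ω
    simp [funext_iff]
  rw [hpast, hfuture]
  exact (hind.indepFun_finset _ _ hdisj hmeas).measure_inter_preimage_eq_mul _ _
    .of_discrete .of_discrete

structure IsRecordIndicators (P : Measure Ω) (ξ : ℕ → Ω → ℕ) : Prop where
  measurable : ∀ i, Measurable (ξ i)
  iIndepFun : iIndepFun ξ P
  le_one : ∀ i ω, ξ i ω ≤ 1
  measure_eq_one : ∀ i : ℕ, 1 ≤ i → P {ω | ξ i ω = 1} = ENNReal.ofReal (1 / (i : ℝ))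

variable [IsProbabilityMeasure P]

namespace IsRecordIndicators

lemma measure_eq_zero (hξ : IsRecordIndicators P ξ) {i : ℕ} (hi : 1 ≤ i) :
    P {ω | ξ i ω = 0} = ENNReal.ofReal (1 - 1 / (i : ℝ)) := by
  rw [measure_eq_zero_eq_one_sub (hξ.measurable i) (hξ.le_one i), hξ.measure_eq_one i hi,
    ENNReal.ofReal_sub _ (by positivity), ENNReal.ofReal_one]

lemma measure_nextRecord_eq_recordKernel (hξ : IsRecordIndicators P ξ) {l j : ℕ} (hl : 1 ≤ l)
    (hlj : l < j) :
    P {ω | ∀ i ∈ Ioc l j, ξ i ω = if i = j then 1 else 0} = recordKernel l j := by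
  obtain ⟨j, rfl⟩ : ∃ j', j = j' + 1 := ⟨j - 1, by omega⟩
  have hmem : ∀ i ∈ Ioc l j, 1 ≤ i ∧ i ≠ j + 1 := fun i hi => by rw [mem_Ioc] at hi; omega
  calc P {ω | ∀ i ∈ Ioc l (j + 1), ξ i ω = if i = j + 1 then 1 else 0}
      = (∏ i ∈ Ioc l j, P {ω | ξ i ω = 0}) * P {ω | ξ (j + 1) ω = 1} := by
        rw [measure_forall_eq_eq_prod hξ.iIndepFun, prod_Ioc_succ_top (by omega), if_pos rfl]
        congr 1
        exact prod_congr rfl fun i hi => by rw [if_neg (hmem i hi).2]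
    _ = ENNReal.ofReal (∏ i ∈ Ioc l j, (1 - 1 / (i : ℝ))) *
          ENNReal.ofReal (1 / (j + 1 : ℕ)) := by
        rw [prod_congr rfl fun i hi => hξ.measure_eq_zero (hmem i hi).1,
          hξ.measure_eq_one _ (by omega), ENNReal.ofReal_prod_of_nonneg fun i hi => ?_]
        rw [sub_nonneg]
        exact div_le_one_of_le₀ (by exact_mod_cast (hmem i hi).1) (by positivity)
    _ = recordKernel l (j + 1) := by
        rw [prod_Ioc_one_sub_one_div hl (by omega), ← ENNReal.ofReal_mul (by positivity),
          recordKernel, if_pos ⟨hl, hlj⟩]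
        congr 1
        push_cast
        field_simp
        ring

lemma measure_hitTime_succ_eq (hξ : IsRecordIndicators P ξ) {m j : ℕ} (hm : 1 ≤ m)
    (hj : j ≠ 0) :
    P {ω | hitTime (ξ · ω) (m + 1) = j} =
      ∑' l, P {ω | hitTime (ξ · ω) m = l} * recordKernel l j := by
  have hunion : {ω | hitTime (ξ · ω) (m + 1) = j} = ⋃ l ∈ Ico 1 j,
      {ω | hitTime (ξ · ω) m = l} ∩
        {ω | ∀ i ∈ Ioc l j, ξ i ω = if i = j then 1 else 0} := by
    ext ω
    simpa using hitTime_succ_eq_iff (fun i => hξ.le_one i ω) hm hj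
  rw [hunion, measure_biUnion_finset, tsum_eq_sum (s := Ico 1 j)]
  · refine sum_congr rfl fun l hl => ?_
    rw [mem_Ico] at hl
    rw [measure_hitTime_eq_inter_eq_mul hξ.iIndepFun hξ.measurable hl.1
        (fun i hi => (mem_Ioc.1 hi).1), hξ.measure_nextRecord_eq_recordKernel hl.1 hl.2]
  · intro l hl
    rw [recordKernel, if_neg (by simpa using hl), mul_zero]
  · exact fun l _ l' _ hll' => Disjoint.mono inf_le_left inf_le_left
      (Set.disjoint_left.2 fun ω h h' => hll' (h.symm.trans h'))
  · refine fun l _ =>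
      (measurable_hitTime_comp hξ.measurable m (measurableSet_singleton l)).inter ?_
    simp only [Set.ofPred_forall]
    exact Finset.measurableSet_biInter _ fun i _ => hξ.measurable i (measurableSet_singleton _)

lemma lintegral_hitTime_succ (hξ : IsRecordIndicators P ξ) {m : ℕ} (hm : 1 ≤ m)
    {φ : ℕ → ℝ≥0∞} (hφ : φ 0 = 0) :
    ∫⁻ ω, φ (hitTime (ξ · ω) (m + 1)) ∂P =
      ∫⁻ ω, ∑' j, recordKernel (hitTime (ξ · ω) m) j * φ j ∂P := by
  rw [lintegral_comp_eq_tsum (measurable_hitTime_comp hξ.measurable _),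
    lintegral_comp_eq_tsum (f := fun l => ∑' j, recordKernel l j * φ j)
      (measurable_hitTime_comp hξ.measurable _)]
  calc ∑' j, φ j * P {ω | hitTime (ξ · ω) (m + 1) = j}
      = ∑' j, ∑' l, recordKernel l j * φ j * P {ω | hitTime (ξ · ω) m = l} := by
        refine tsum_congr fun j => ?_
        rcases eq_or_ne j 0 with rfl | hj
        · simp [hφ, recordKernel]
        · rw [hξ.measure_hitTime_succ_eq hm hj, ← ENNReal.tsum_mul_left]
          exact tsum_congr fun l => by ring
    _ = ∑' l, (∑' j, recordKernel l j * φ j) * P {ω | hitTime (ξ · ω) m = l} := by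
        rw [ENNReal.tsum_comm]
        exact tsum_congr fun l => ENNReal.tsum_mul_right

lemma lintegral_invSucc_hitTime_le (hξ : IsRecordIndicators P ξ) {m : ℕ} (hm : 1 ≤ m) :
    ∫⁻ ω, invSucc (hitTime (ξ · ω) m) ∂P ≤ ENNReal.ofReal (1 / 2) ^ m := by
  induction m, hm using Nat.le_induction with
  | base =>
    calc ∫⁻ ω, invSucc (hitTime (ξ · ω) 1) ∂P ≤ ∫⁻ _, ENNReal.ofReal (1 / 2) ∂P :=
          lintegral_mono fun ω => invSucc_le_half _
      _ = ENNReal.ofReal (1 / 2) ^ 1 := by simp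
  | succ m hm ih =>
    rw [hξ.lintegral_hitTime_succ hm (by simp [invSucc])]
    calc ∫⁻ ω, ∑' j, recordKernel (hitTime (ξ · ω) m) j * invSucc j ∂P
        ≤ ∫⁻ ω, ENNReal.ofReal (1 / 2) * invSucc (hitTime (ξ · ω) m) ∂P :=
          lintegral_mono fun ω => tsum_recordKernel_mul_invSucc_le _
      _ = ENNReal.ofReal (1 / 2) * ∫⁻ ω, invSucc (hitTime (ξ · ω) m) ∂P :=
          lintegral_const_mul' _ _ ENNReal.ofReal_ne_top
      _ ≤ ENNReal.ofReal (1 / 2) ^ (m + 1) := by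
          rw [pow_succ']
          gcongr

lemma lintegral_inv_hitTime_le (hξ : IsRecordIndicators P ξ) {n : ℕ} (hn : 2 ≤ n) :
    ∫⁻ ω, ENNReal.ofReal (hitTime (ξ · ω) n : ℝ)⁻¹ ∂P ≤
      ENNReal.ofReal (3 / (4 * n)) := by
  obtain ⟨m, rfl⟩ : ∃ m, n = m + 1 := ⟨n - 1, by omega⟩
  rw [hξ.lintegral_hitTime_succ (by omega) (φ := fun j => ENNReal.ofReal (j : ℝ)⁻¹)
    (by simp)]
  calc ∫⁻ ω, ∑' j, recordKernel (hitTime (ξ · ω) m) j * ENNReal.ofReal (j : ℝ)⁻¹ ∂P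
      ≤ ∫⁻ ω, ENNReal.ofReal (3 / 4) * invSucc (hitTime (ξ · ω) m) ∂P :=
        lintegral_mono fun ω => tsum_recordKernel_mul_inv_le _
    _ = ENNReal.ofReal (3 / 4) * ∫⁻ ω, invSucc (hitTime (ξ · ω) m) ∂P :=
        lintegral_const_mul' _ _ ENNReal.ofReal_ne_top
    _ ≤ ENNReal.ofReal (3 / 4) * ENNReal.ofReal (1 / 2) ^ m := by
        gcongr
        exact hξ.lintegral_invSucc_hitTime_le (by omega)
    _ ≤ ENNReal.ofReal (3 / (4 * (m + 1 : ℕ))) := by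
        rw [← ENNReal.ofReal_pow (by norm_num), ← ENNReal.ofReal_mul (by norm_num)]
        refine ENNReal.ofReal_le_ofReal ?_
        have : ((m + 1 : ℕ) : ℝ) ≤ 2 ^ m := by exact_mod_cast Nat.lt_two_pow_self
        rw [div_pow, one_pow, ← div_eq_mul_one_div, div_div]
        gcongr

end IsRecordIndicators

end Probability

end RecordTime

open RecordTime

theorem stmt_9 {Ω : Type*} [MeasurableSpace Ω]
    (P : Measure Ω) [IsProbabilityMeasure P]
    (ξ : ℕ → Ω → ℕ) (hmeas : ∀ i, Measurable (ξ i))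
    (hindep : iIndepFun ξ P)
    (hval : ∀ i ω, ξ i ω ≤ 1)
    (hdist : ∀ i : ℕ, 1 ≤ i → P {ω | ξ i ω = 1} = ENNReal.ofReal (1 / (i : ℝ)))
    (ν : ℕ → Ω → ℕ)
    (hν : ∀ k ω, ν k ω = sInf {j : ℕ | 1 ≤ j ∧ ∑ i ∈ Finset.Icc 1 j, ξ i ω = k})
    (n : ℕ) (hn : 2 ≤ n) :
    ∫ ω, ((ν n ω : ℝ))⁻¹ ∂P ≤ 3 / (4 * n) := by
  obtain rfl : ν = fun k ω => hitTime (ξ · ω) k := funext₂ hν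
  have hξ : IsRecordIndicators P ξ := ⟨hmeas, hindep, hval, hdist⟩
  have hinv_meas : Measurable fun ω => ((hitTime (ξ · ω) n : ℕ) : ℝ)⁻¹ :=
    (Measurable.of_discrete (f := fun k : ℕ => (k : ℝ)⁻¹)).comp
      (measurable_hitTime_comp hmeas n)
  rw [integral_eq_lintegral_of_nonneg_ae (ae_of_all _ fun ω => by positivity)
    hinv_meas.aestronglyMeasurable]
  exact ENNReal.toReal_le_of_le_ofReal (by positivity) (hξ.lintegral_inv_hitTime_le hn)
end

section
/- With fₙ(z) := Lₙ(Ẽₙ(z)), where Ẽₙ is the standard tetration (n-fold iterated exponential) and Lₙ the modified iterated logarithm, the sequence (fₙ(z))_{n∈ℕ} is strictly increasing in n for each fixed z ∈ ℝ. -/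
/-!
Writing `fₙ z = Lₙ (Ẽₙ z)`, peeling off the outer `1 + log` of `Lₙ₊₁` and the inner `exp` of
`Ẽₙ₊₁` gives `fₙ₊₁ z = 1 + log (fₙ (exp z))`. From this, `z ≤ fₙ z` follows by induction, which
keeps every argument of `log` positive, and then `fₙ z < fₙ₊₁ z` follows by induction as well,
the base case being `z < 1 + z`.
-/

noncomputable def modL : ℕ → ℝ → ℝ
  | 0, ρ => ρ
  | n + 1, ρ => 1 + Real.log (modL n ρ)

/-- Standard tetration: n-fold iterated exponential. -/
noncomputable def stE : ℕ → ℝ → ℝ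
  | 0, z => z
  | n + 1, z => Real.exp (stE n z)

open Real

lemma stE_succ' (n : ℕ) (z : ℝ) : stE (n + 1) z = stE n (exp z) := by
  induction n with
  | zero => rfl
  | succ n ih => rw [stE, ih, stE]

lemma modL_stE_succ (n : ℕ) (z : ℝ) :
    modL (n + 1) (stE (n + 1) z) = 1 + log (modL n (stE n (exp z))) := by
  rw [stE_succ', modL]

lemma le_modL_stE (n : ℕ) (z : ℝ) : z ≤ modL n (stE n z) := by
  induction n generalizing z with
  | zero => exact le_rfl
  | succ n ih =>
    rw [modL_stE_succ]
    have h := log_le_log (exp_pos z) (ih (exp z))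
    rw [log_exp] at h
    linarith

lemma modL_stE_lt_succ (n : ℕ) (z : ℝ) :
    modL n (stE n z) < modL (n + 1) (stE (n + 1) z) := by
  induction n generalizing z with
  | zero =>
    rw [modL_stE_succ]
    simp only [modL, stE, log_exp]
    linarith
  | succ n ih =>
    rw [modL_stE_succ, modL_stE_succ (n + 1)]
    have hpos : 0 < modL n (stE n (exp z)) := (exp_pos z).trans_le (le_modL_stE n _)
    linarith [log_lt_log hpos (ih (exp z))]

theorem stmt_11 (z : ℝ) :
    StrictMono (fun n : ℕ => modL n (stE n z)) :=
  strictMono_nat_of_lt_succ fun n => modL_stE_lt_succ n z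
end

section
/- The limit function f(z) = limₙ Lₙ(Ẽₙ(z)) conjugates the modified and standard tetration dynamics: Eₙ(f(z)) = f(Ẽₙ(z)) for all n ∈ ℕ and z ∈ ℝ, where Eₙ is the modified tetration. -/
noncomputable def modE : ℕ → ℝ → ℝ
  | 0, ρ => ρ
  | n + 1, ρ => Real.exp (modE n ρ - 1)

open Filter Topology

lemma stE_pos {x : ℝ} (hx : 0 < x) : ∀ n : ℕ, 0 < stE n x
  | 0 => hx
  | _ + 1 => Real.exp_pos _

lemma stE_succ_eq_stE_exp : ∀ (n : ℕ) (x : ℝ), stE (n + 1) x = stE n (Real.exp x)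
  | 0, _ => rfl
  | n + 1, x => congrArg Real.exp (stE_succ_eq_stE_exp n x)

lemma one_le_modL {ρ : ℝ} (hρ : 1 ≤ ρ) : ∀ n : ℕ, 1 ≤ modL n ρ
  | 0 => hρ
  | n + 1 => le_add_of_nonneg_right (Real.log_nonneg (one_le_modL hρ n))

lemma modL_stE_pos {x : ℝ} (hx : 0 < x) : ∀ n : ℕ, 0 < modL n (stE n x)
  | 0 => hx
  | n + 1 => zero_lt_one.trans_le <| one_le_modL (Real.one_le_exp (stE_pos hx n).le) (n + 1)

lemma exp_modL_succ_stE_succ_sub_one (n : ℕ) (x : ℝ) :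
    Real.exp (modL (n + 1) (stE (n + 1) x) - 1) = modL n (stE n (Real.exp x)) := by
  rw [modL, stE_succ_eq_stE_exp, add_sub_cancel_left, Real.exp_log (modL_stE_pos (Real.exp_pos x) n)]

lemma tendsto_modL_stE_exp {x L : ℝ}
    (h : Tendsto (fun n : ℕ => modL n (stE n x)) atTop (𝓝 L)) :
    Tendsto (fun n : ℕ => modL n (stE n (Real.exp x))) atTop (𝓝 (Real.exp (L - 1))) := by
  have hshift := ((tendsto_add_atTop_iff_nat 1).mpr h).sub_const 1
  simpa only [Function.comp_def, exp_modL_succ_stE_succ_sub_one] using (Real.continuous_exp.tendsto _).comp hshift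

theorem stmt_14 (f : ℝ → ℝ)
    (hf : ∀ z : ℝ, Filter.Tendsto (fun n : ℕ => modL n (stE n z)) Filter.atTop (nhds (f z))) :
    ∀ (n : ℕ) (z : ℝ), modE n (f z) = f (stE n z) := by
  have hconj (x : ℝ) : f (Real.exp x) = Real.exp (f x - 1) :=
    tendsto_nhds_unique (hf (Real.exp x)) (tendsto_modL_stE_exp (hf x))
  intro n z
  induction n with
  | zero => rfl
  | succ n ih => rw [modE, stE, ih, hconj]
end

section
/- Let (ξᵢ)_{i∈ℕ} be independent Bernoulli random variables with P(ξᵢ=1)=1/i, and K(M) = ξ₁+…+ξ_M. For any integers k ≥ 2 and z ≥ 1, the z-fold iterated composition of independent copies of K started at k satisfies P(N_k^{(z)} ≥ 2) ≤ k·2^{-z}, where N_k^{(0)} = k and N_k^{(j)} = K^{(j)}(N_k^{(j-1)}) with (K^{(j)}) independent copies of K. -/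
/-!
The record indicators `ξ (j + 1, i)` of round `j + 1` are independent of the first `j` rounds,
hence of `N j`, and `P (ξ (j + 1, i) = 1) = 1 / i ≤ 1 / 2` for `i ≥ 2`. The first survivor is
always a record, so the expected excess `E[N j - 1] = ∑_{i ≥ 2} P (i ≤ N j)` at least halves in
every round: `E[N z - 1] ≤ (k - 1) / 2 ^ z`, and Markov's inequality for `N z - 1` concludes.
-/

open MeasureTheory ProbabilityTheory Finset
open scoped ENNReal

lemma sum_Ioc_eq_sum_Ioc_ite {M : Type*} [AddCommMonoid M] {a n k : ℕ} (hnk : n ≤ k)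
    (f : ℕ → M) : ∑ i ∈ Ioc a n, f i = ∑ i ∈ Ioc a k, if i ≤ n then f i else 0 := by
  rw [← sum_filter]
  congr 1
  ext i
  simp only [mem_Ioc, mem_filter]
  omega

lemma sum_Icc_one_sub_one_le {b : ℕ → ℕ} (hb : b 1 ≤ 1) (n : ℕ) :
    (∑ i ∈ Icc 1 n, b i) - 1 ≤ ∑ i ∈ Ioc 1 n, b i := by
  rcases n.eq_zero_or_pos with rfl | hn
  · simp
  · rw [← add_sum_Ioc_eq_sum_Icc hn]
    omega

section

variable {Ω : Type*}

abbrev roundsUpTo (ξ : ℕ × ℕ → Ω → ℕ) (j : ℕ) : MeasurableSpace Ω :=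
  ⨆ p ∈ {p : ℕ × ℕ | p.1 ≤ j}, MeasurableSpace.comap (ξ p) inferInstance

section Survivors

variable {ξ : ℕ × ℕ → Ω → ℕ} {N : ℕ → Ω → ℕ} {k : ℕ}

lemma survivors_le (hval : ∀ p ω, ξ p ω ≤ 1) (hN0 : ∀ ω, N 0 ω = k)
    (hNrec : ∀ j ω, N (j + 1) ω = ∑ i ∈ Icc 1 (N j ω), ξ (j + 1, i) ω) (j : ℕ) (ω : Ω) :
    N j ω ≤ k := by
  induction j with
  | zero => exact (hN0 ω).le
  | succ j ih =>
    rw [hNrec]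
    calc ∑ i ∈ Icc 1 (N j ω), ξ (j + 1, i) ω ≤ #(Icc 1 (N j ω)) • 1 :=
          sum_le_card_nsmul _ _ _ fun i _ => hval _ ω
      _ ≤ k := by simpa using ih

lemma measurable_roundsUpTo_survivors (hN0 : ∀ ω, N 0 ω = k)
    (hNrec : ∀ j ω, N (j + 1) ω = ∑ i ∈ Icc 1 (N j ω), ξ (j + 1, i) ω) (j : ℕ) :
    Measurable[roundsUpTo ξ j] (N j) := by
  induction j with
  | zero =>
    rw [show N 0 = fun _ => k from funext hN0]
    exact measurable_const
  | succ j ih =>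
    have hmono : roundsUpTo ξ j ≤ roundsUpTo ξ (j + 1) :=
      biSup_mono fun p (hp : p.1 ≤ j) => (by omega : p.1 ≤ j + 1)
    have hξ i : Measurable[roundsUpTo ξ (j + 1)] (ξ (j + 1, i)) :=
      Measurable.of_comap_le (le_biSup (fun p => MeasurableSpace.comap (ξ p) _)
        (show (j + 1, i).1 ≤ j + 1 from le_rfl))
    rw [show N (j + 1) = _ from funext (hNrec j)]
    -- the summation range `N j ω` is random, but it takes values in the countable type `ℕ`
    have := @measurable_from_prod_countable_left Ω ℕ ℕ (roundsUpTo ξ (j + 1)) _ _ _ _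
      (f := fun q => ∑ i ∈ Icc 1 q.2, ξ (j + 1, i) q.1)
      fun n => Finset.measurable_sum (Icc 1 n) fun i _ => hξ i
    exact this.comp (measurable_id.prodMk (ih.mono hmono le_rfl))

end Survivors

variable [MeasurableSpace Ω] {P : Measure Ω}

lemma roundsUpTo_le {ξ : ℕ × ℕ → Ω → ℕ} (hmeas : ∀ p, Measurable (ξ p)) (j : ℕ) :
    roundsUpTo ξ j ≤ ‹MeasurableSpace Ω› :=
  iSup₂_le fun p _ => (hmeas p).comap_le

lemma indepFun_of_measurable_roundsUpTo {ξ : ℕ × ℕ → Ω → ℕ} (hmeas : ∀ p, Measurable (ξ p))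
    (hindep : iIndepFun ξ P) {j : ℕ} {X : Ω → ℕ} (hX : Measurable[roundsUpTo ξ j] X)
    {p : ℕ × ℕ} (hp : j < p.1) : IndepFun X (ξ p) P := by
  have h := indep_iSup_of_disjoint (fun p => (hmeas p).comap_le)
    ((iIndepFun_iff_iIndep _ _ _).1 hindep) (S := {p | p.1 ≤ j}) (T := {p})
    (Set.disjoint_singleton_right.2 (not_le.2 hp))
  rw [IndepFun_iff_Indep]
  refine indep_of_indep_of_le_left (indep_of_indep_of_le_right h ?_) hX.comap_le
  exact le_biSup (fun q => MeasurableSpace.comap (ξ q) inferInstance) (Set.mem_singleton p)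

lemma lintegral_sum_indicator_one {ι : Type*} (s : Finset ι) {E : ι → Set Ω}
    (hE : ∀ i, MeasurableSet (E i)) :
    ∫⁻ ω, ∑ i ∈ s, (E i).indicator 1 ω ∂P = ∑ i ∈ s, P (E i) := by
  rw [lintegral_finsetSum _ fun i _ => measurable_one.indicator (hE i)]
  exact sum_congr rfl fun i _ => lintegral_indicator_one (hE i)

lemma lintegral_natCast_sub_one {X : Ω → ℕ} (hX : Measurable X) {k : ℕ}
    (hXk : ∀ ω, X ω ≤ k) :
    ∫⁻ ω, ((X ω - 1 : ℕ) : ℝ≥0∞) ∂P = ∑ i ∈ Ioc 1 k, P {ω | i ≤ X ω} := by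
  rw [← lintegral_sum_indicator_one (E := fun i => {ω | i ≤ X ω}) _
    fun i => hX measurableSet_Ici]
  refine lintegral_congr fun ω => ?_
  simp only [Set.indicator_apply, Set.mem_ofPred_eq, Pi.one_apply]
  rw [← sum_Ioc_eq_sum_Ioc_ite (hXk ω), sum_const, Nat.card_Ioc, nsmul_one]

lemma meas_two_le_le_lintegral_sub_one {X : Ω → ℕ} (hX : Measurable X) :
    P {ω | 2 ≤ X ω} ≤ ∫⁻ ω, ((X ω - 1 : ℕ) : ℝ≥0∞) ∂P := by
  have h := mul_meas_ge_le_lintegral₀ (μ := P)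
    (f := fun ω => ((X ω - 1 : ℕ) : ℝ≥0∞)) (by fun_prop) 1
  simp only [one_mul, Nat.one_le_cast] at h
  refine (measure_mono fun ω (hω : 2 ≤ X ω) => ?_).trans h
  change 1 ≤ X ω - 1
  omega

lemma lintegral_sum_Icc_sub_one_le {X : Ω → ℕ} (hX : Measurable X) {k : ℕ}
    (hXk : ∀ ω, X ω ≤ k) {ζ : ℕ → Ω → ℕ} (hζ : ∀ i, Measurable (ζ i))
    (hζ1 : ∀ i ω, ζ i ω ≤ 1) (hindep : ∀ i, IndepFun X (ζ i) P)
    (hp : ∀ i, 2 ≤ i → P {ω | ζ i ω = 1} ≤ 2⁻¹) :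
    ∫⁻ ω, ((∑ i ∈ Icc 1 (X ω), ζ i ω) - 1 : ℕ) ∂P ≤
      2⁻¹ * ∫⁻ ω, ((X ω - 1 : ℕ) : ℝ≥0∞) ∂P := by
  set E : ℕ → Set Ω := fun i => {ω | i ≤ X ω} ∩ {ω | ζ i ω = 1}
  have hE i : MeasurableSet (E i) :=
    (hX measurableSet_Ici).inter (hζ i (measurableSet_singleton 1))
  have hpt ω : (((∑ i ∈ Icc 1 (X ω), ζ i ω) - 1 : ℕ) : ℝ≥0∞) ≤
      ∑ i ∈ Ioc 1 k, (E i).indicator 1 ω := by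
    have hterm i : (E i).indicator 1 ω = (((if i ≤ X ω then ζ i ω else 0 : ℕ)) : ℝ≥0∞) := by
      rcases Nat.le_one_iff_eq_zero_or_eq_one.1 (hζ1 i ω) with h | h <;>
        simp [E, Set.indicator_apply, h]
    simp only [hterm, ← Nat.cast_sum, ← sum_Ioc_eq_sum_Ioc_ite (hXk ω)]
    exact_mod_cast sum_Icc_one_sub_one_le (hζ1 1 ω) (X ω)
  calc ∫⁻ ω, ((∑ i ∈ Icc 1 (X ω), ζ i ω) - 1 : ℕ) ∂P
      ≤ ∫⁻ ω, ∑ i ∈ Ioc 1 k, (E i).indicator 1 ω ∂P := lintegral_mono hpt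
    _ = ∑ i ∈ Ioc 1 k, P {ω | i ≤ X ω} * P {ω | ζ i ω = 1} := by
      rw [lintegral_sum_indicator_one _ hE]
      exact sum_congr rfl fun i _ => (hindep i).measure_inter_preimage_eq_mul _ _
        measurableSet_Ici (measurableSet_singleton 1)
    _ ≤ ∑ i ∈ Ioc 1 k, P {ω | i ≤ X ω} * 2⁻¹ := by
      gcongr with i hi
      exact hp i (mem_Ioc.1 hi).1
    _ = 2⁻¹ * ∫⁻ ω, ((X ω - 1 : ℕ) : ℝ≥0∞) ∂P := by
      rw [lintegral_natCast_sub_one hX hXk, mul_sum]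
      simp only [mul_comm]

end

theorem stmt_17_general {Ω : Type*} [MeasurableSpace Ω]
    (P : Measure Ω) [IsProbabilityMeasure P]
    (ξ : ℕ × ℕ → Ω → ℕ) (hmeas : ∀ ji, Measurable (ξ ji))
    (hindep : iIndepFun ξ P)
    (hval : ∀ ji ω, ξ ji ω ≤ 1)
    (hdist : ∀ j i : ℕ, 1 ≤ i → P {ω | ξ (j, i) ω = 1} = ENNReal.ofReal (1 / (i : ℝ)))
    (k : ℕ)
    (N : ℕ → Ω → ℕ)
    (hN0 : ∀ ω, N 0 ω = k)
    (hNrec : ∀ (j : ℕ) (ω : Ω), N (j + 1) ω = ∑ i ∈ Finset.Icc 1 (N j ω), ξ (j + 1, i) ω)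
    (z : ℕ) :
    P {ω | 2 ≤ N z ω} ≤ ENNReal.ofReal ((k : ℝ) / 2 ^ z) := by
  have hNk := survivors_le hval hN0 hNrec
  have hNpast := measurable_roundsUpTo_survivors hN0 hNrec
  have hN j : Measurable (N j) := (hNpast j).mono (roundsUpTo_le hmeas j) le_rfl
  have hhalf j i (hi : 2 ≤ i) : P {ω | ξ (j, i) ω = 1} ≤ 2⁻¹ := by
    calc P {ω | ξ (j, i) ω = 1} ≤ ENNReal.ofReal (1 / 2) := by
          rw [hdist j i (by omega)]
          exact ENNReal.ofReal_le_ofReal (one_div_le_one_div_of_le two_pos (by exact_mod_cast hi))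
      _ = 2⁻¹ := by rw [one_div, ENNReal.ofReal_inv_of_pos two_pos, ENNReal.ofReal_ofNat]
  have hexcess j : ∫⁻ ω, ((N j ω - 1 : ℕ) : ℝ≥0∞) ∂P ≤ 2⁻¹ ^ j * (k - 1 : ℕ) := by
    induction j with
    | zero => simp [hN0]
    | succ j ih =>
      simp_rw [hNrec, pow_succ', mul_assoc]
      exact (lintegral_sum_Icc_sub_one_le (hN j) (hNk j) (fun i => hmeas _) (fun i => hval _)
        (fun i => indepFun_of_measurable_roundsUpTo hmeas hindep (hNpast j) (by simp))
        (hhalf _)).trans (by gcongr)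
  calc P {ω | 2 ≤ N z ω} ≤ ∫⁻ ω, ((N z ω - 1 : ℕ) : ℝ≥0∞) ∂P :=
        meas_two_le_le_lintegral_sub_one (hN z)
    _ ≤ 2⁻¹ ^ z * (k - 1 : ℕ) := hexcess z
    _ ≤ ENNReal.ofReal ((k : ℝ) / 2 ^ z) := by
      rw [ENNReal.ofReal_div_of_pos (by positivity), ENNReal.ofReal_natCast,
        ENNReal.ofReal_pow zero_le_two, ENNReal.ofReal_ofNat, ENNReal.div_eq_inv_mul,
        ENNReal.inv_pow]
      gcongr
      exact Nat.sub_le k 1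

theorem stmt_17 {Ω : Type*} [MeasurableSpace Ω]
    (P : Measure Ω) [IsProbabilityMeasure P]
    (ξ : ℕ × ℕ → Ω → ℕ) (hmeas : ∀ ji, Measurable (ξ ji))
    (hindep : iIndepFun ξ P)
    (hval : ∀ ji ω, ξ ji ω ≤ 1)
    (hdist : ∀ j i : ℕ, 1 ≤ i → P {ω | ξ (j, i) ω = 1} = ENNReal.ofReal (1 / (i : ℝ)))
    (k : ℕ) (hk : 2 ≤ k)
    (N : ℕ → Ω → ℕ)
    (hN0 : ∀ ω, N 0 ω = k)
    (hNrec : ∀ (j : ℕ) (ω : Ω), N (j + 1) ω = ∑ i ∈ Finset.Icc 1 (N j ω), ξ (j + 1, i) ω)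
    (z : ℕ) (hz : 1 ≤ z) :
    P {ω | 2 ≤ N z ω} ≤ ENNReal.ofReal ((k : ℝ) / 2 ^ z) :=
  stmt_17_general P ξ hmeas hindep hval hdist k N hN0 hNrec z
end
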